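/- In the (n,p,q)-planted partition model with planted clusters L, R of size n/2 and p > q, if T* is a tree whose top split is (L, R) and T is any tree that is not ε-good for some 0 < ε < 1/6, then E[cost_G(T)] > E[cost_G(T*)] + (1/16)·ε·(p−q)·n³. -/

import Mathlib

open Finset

/-- A rooted binary tree whose leaves are labeled by elements of `Fin n`. -/
inductive HTree (n : ℕ) : Type where
  | leaf : Fin n → HTree n
  | node : HTree n → HTree n → HTree n

namespace HTree

variable {n : ℕ}

/-- The list of leaf labels, left to right. -/
def leafList : HTree n → List (Fin n)
  | .leaf v => [v]
  | .node l r => l.leafList ++ r.leafList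

/-- The set of leaf labels of a tree. -/
def leaves (T : HTree n) : Finset (Fin n) := T.leafList.toFinset

/-- `T` is a hierarchical clustering tree of the whole vertex set `Fin n`:
its leaves are in one-to-one correspondence with `Fin n`. -/
def IsFullTree (T : HTree n) : Prop := T.leafList.Nodup ∧ T.leaves = Finset.univ

/-- `|leaves(T[i ∨ j])|`: the number of leaves of the subtree rooted at the
lowest common ancestor of leaves `i` and `j`. -/
def lcaSize : HTree n → Fin n → Fin n → ℕ
  | .leaf _, _, _ => 1
  | .node l r, i, j =>
    if i ∈ l.leaves ∧ j ∈ l.leaves then l.lcaSize i j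
    else if i ∈ r.leaves ∧ j ∈ r.leaves then r.lcaSize i j
    else (l.leaves ∪ r.leaves).card

/-- `cost_G(T) = Σ_{{i,j}} w_{ij} |leaves(T[i ∨ j])|`, the sum being over
unordered pairs (represented as ordered pairs `p.1 < p.2`). -/
def pairCost (w : Fin n → Fin n → ℝ) (T : HTree n) : ℝ :=
  ∑ p ∈ Finset.univ.filter (fun p : Fin n × Fin n => p.1 < p.2),
    w p.1 p.2 * (T.lcaSize p.1 p.2 : ℝ)

/-- `w(A, B)`: total weight of edges between `A` and `B`. -/
def cut (w : Fin n → Fin n → ℝ) (A B : Finset (Fin n)) : ℝ :=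
  ∑ i ∈ A, ∑ j ∈ B, w i j

/-- The sum-of-splits formulation of the cost:
`Σ over internal splits S → (S₁,S₂) of |S| ⬝ w(S₁,S₂)`. -/
def splitCost (w : Fin n → Fin n → ℝ) : HTree n → ℝ
  | .leaf _ => 0
  | .node l r =>
      ((l.leaves ∪ r.leaves).card : ℝ) * cut w l.leaves r.leaves
        + splitCost w l + splitCost w r

/-- `Subtree t T`: `t` occurs as a subtree of `T`. -/
inductive Subtree : HTree n → HTree n → Prop
  | refl (t : HTree n) : Subtree t t
  | left {t l r : HTree n} : Subtree t l → Subtree t (.node l r)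
  | right {t l r : HTree n} : Subtree t r → Subtree t (.node l r)

end HTree

namespace HTree

/-- `T` is `ε`-good for the planted bipartition `(L, Lᶜ)`: it contains a split
`S → (S₁, S₂)` with `|S ∩ L|, |S ∩ R| ≥ (1-ε)n/2`, and `|S₁ ∩ L| ≤ εn/2` and
`|S₂ ∩ R| ≤ εn/2` (or with `S₁, S₂` swapped), where `R = Lᶜ`. -/
def EpsGood (ε : ℝ) (L : Finset (Fin n)) (T : HTree n) : Prop :=
  ∃ l r : HTree n, Subtree (.node l r) T ∧
    (1 - ε) * n / 2 ≤ (((l.leaves ∪ r.leaves) ∩ L).card : ℝ) ∧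
    (1 - ε) * n / 2 ≤ (((l.leaves ∪ r.leaves) ∩ Lᶜ).card : ℝ) ∧
    ((((l.leaves ∩ L).card : ℝ) ≤ ε * n / 2 ∧ ((r.leaves ∩ Lᶜ).card : ℝ) ≤ ε * n / 2) ∨
     (((l.leaves ∩ Lᶜ).card : ℝ) ≤ ε * n / 2 ∧ ((r.leaves ∩ L).card : ℝ) ≤ ε * n / 2))

end HTree

/-!
With `w = q + (p - q)·[same side]` and the cost written as a sum over splits, the expected cost
of a hierarchy `T` is `q·(n³ - n)/3 + (p - q)·(cost of T on the two planted cliques)`. The latter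
is the cliques' own cost `2·(m³ - m)/3`, `m = n/2`, plus a nonnegative surplus: a split with `a`,
`b` leaves of `L` and `c`, `d` leaves of `R` on its two sides charges each of the `a·b` pairs inside
`L` for the `c + d` foreign leaves below it, and symmetrically. The surplus of `T*` vanishes. In a
tree that is not ε-good, follow from the root the splits with at least `s = (1-ε)m` leaves of each
cluster: when neither child keeps this property, not being ε-good makes the split itself costly,
and altogether the surplus exceeds `ε(1-ε)²m³ > εm³/2 = εn³/16`.
-/

lemma Finset.card_inter_add_card_inter_compl {α : Type*} [Fintype α] [DecidableEq α]
    (S L : Finset α) : #(S ∩ L) + #(S ∩ Lᶜ) = #S := by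
  rw [← sdiff_eq_inter_compl, card_inter_add_card_sdiff]

lemma Finset.sum_offDiag_eq_two_mul_sum_lt {ι : Type*} [Fintype ι] [LinearOrder ι]
    (g : ι → ι → ℝ) (hg : ∀ i j, g i j = g j i) :
    ∑ x ∈ (univ : Finset ι).offDiag, g x.1 x.2 = 2 * ∑ x : ι × ι with x.1 < x.2, g x.1 x.2 := by
  have h_swap : ∑ x ∈ univ.offDiag with ¬ x.1 < x.2, g x.1 x.2
      = ∑ x ∈ univ.offDiag with x.1 < x.2, g x.1 x.2 :=
    sum_nbij' Prod.swap Prod.swap (by simp; grind) (by simp; grind) (by simp) (by simp)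
      fun x _ => hg _ _
  have h_lt : {x ∈ (univ : Finset ι).offDiag | x.1 < x.2}
      = ({x | x.1 < x.2} : Finset (ι × ι)) := by
    ext x; simpa using ne_of_lt
  rw [← sum_filter_add_sum_filter_not _ (fun x => x.1 < x.2), h_swap, h_lt, two_mul]

/-- The cost of a `k`-clique under every hierarchy on it. -/
noncomputable def cliqueCost (k : ℕ) : ℝ := ((k : ℝ) ^ 3 - k) / 3

lemma cliqueCost_add (x y : ℕ) :
    cliqueCost (x + y) = cliqueCost x + cliqueCost y + x * y * ((x : ℝ) + y) := by
  simp only [cliqueCost]; push_cast; ring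

lemma cliqueCost_of_le_one {k : ℕ} (h : k ≤ 1) : cliqueCost k = 0 := by
  interval_cases k <;> norm_num [cliqueCost]

def splitSurplus (a b c d : ℝ) : ℝ := a * b * (c + d) + c * d * (a + b)

lemma splitSurplus_swap (a b c d : ℝ) : splitSurplus b a d c = splitSurplus a b c d := by
  unfold splitSurplus; ring

lemma sq_mul_le_splitSurplus {s a b c d : ℝ} (hs : 0 ≤ s) (ha : s ≤ a) (hc : s ≤ c)
    (hb : 0 ≤ b) (hd : 0 ≤ d) : s ^ 2 * (b + d) ≤ splitSurplus a b c d := by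
  have hac : s ^ 2 ≤ a * c := by nlinarith
  unfold splitSurplus
  nlinarith [mul_le_mul_of_nonneg_right hac (add_nonneg hb hd),
    mul_nonneg (mul_nonneg (hs.trans ha) hb) hd, mul_nonneg (mul_nonneg (hs.trans hc) hd) hb]

lemma mul_sq_lt_splitSurplus_add {s t a b c d : ℝ} (hs : 0 < s) (ha : 0 ≤ a) (hb : 0 ≤ b)
    (hc : 0 ≤ c) (hd : 0 ≤ d) (hab : s ≤ a + b) (hcd : s ≤ c + d) (hab' : a + b ≤ s + t)
    (hcd' : c + d ≤ s + t) (hl : a < s ∨ c < s) (hr : b < s ∨ d < s) (h₁ : t < a ∨ t < d)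
    (h₂ : t < c ∨ t < b) :
    t * s ^ 2 < splitSurplus a b c d + s ^ 2 * ((s + t - (a + b)) + (s + t - (c + d))) := by
  have key : (a < s ∧ b < s) ∨ (c < s ∧ d < s) := by
    by_contra! h
    rcases lt_or_ge a s with has | has
    · have hbs := h.1 has
      have hds : d < s := hr.resolve_left hbs.not_gt
      have hcs : s ≤ c := not_lt.1 fun hcs => (h.2 hcs).not_gt hds
      rcases h₁ with h₁ | h₁ <;> linarith
    · have hcs : c < s := hl.resolve_left has.not_gt
      have hds := h.2 hcs
      rcases h₂ with h₂ | h₂ <;> linarith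
  unfold splitSurplus
  rcases key with ⟨has, hbs⟩ | ⟨hcs, hds⟩
  · nlinarith [mul_pos hs (mul_pos (sub_pos.2 has) (sub_pos.2 hbs)),
      mul_le_mul_of_nonneg_left hcd (mul_nonneg ha hb),
      mul_nonneg (mul_nonneg hc hd) (add_nonneg ha hb), mul_nonneg (sq_nonneg s) (sub_nonneg.2 hcd')]
  · nlinarith [mul_pos hs (mul_pos (sub_pos.2 hcs) (sub_pos.2 hds)),
      mul_le_mul_of_nonneg_left hab (mul_nonneg hc hd),
      mul_nonneg (mul_nonneg ha hb) (add_nonneg hc hd), mul_nonneg (sq_nonneg s) (sub_nonneg.2 hab')]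

namespace HTree

variable {n : ℕ}

@[simp] lemma leaves_leaf (v : Fin n) : (leaf v).leaves = {v} := by
  simp [leaves, leafList]

@[simp] lemma leaves_node (l r : HTree n) : (node l r).leaves = l.leaves ∪ r.leaves := by
  simp [leaves, leafList, List.toFinset_append]

lemma Nodup.of_node {l r : HTree n} (h : (node l r).leafList.Nodup) :
    l.leafList.Nodup ∧ r.leafList.Nodup ∧ Disjoint l.leaves r.leaves := by
  rw [leafList, List.nodup_append] at h
  exact ⟨h.1, h.2.1, Finset.disjoint_left.2 fun _ ha hb =>
    h.2.2 _ (List.mem_toFinset.1 ha) _ (List.mem_toFinset.1 hb) rfl⟩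

lemma pos_of_tree (T : HTree n) : 0 < n := by
  induction T with
  | leaf v => exact v.pos
  | node l r ih _ => exact ih

lemma lcaSize_comm (T : HTree n) (i j : Fin n) : T.lcaSize i j = T.lcaSize j i := by
  induction T with
  | leaf v => rfl
  | node l r ihl ihr => simp only [lcaSize, ihl, ihr, and_comm]

lemma card_leaves_node_inter {l r : HTree n} (h : Disjoint l.leaves r.leaves)
    (S : Finset (Fin n)) :
    #((node l r).leaves ∩ S) = #(l.leaves ∩ S) + #(r.leaves ∩ S) := by
  rw [leaves_node, union_inter_distrib_right,
    card_union_of_disjoint (h.mono inter_subset_left inter_subset_left)]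

lemma lcaSize_node_of_mem_left {l r : HTree n} {i j : Fin n} (hi : i ∈ l.leaves)
    (hj : j ∈ l.leaves) : (node l r).lcaSize i j = l.lcaSize i j := by
  simp [lcaSize, hi, hj]

lemma lcaSize_node_of_mem_right {l r : HTree n} (h : Disjoint l.leaves r.leaves) {i j : Fin n}
    (hi : i ∈ r.leaves) (hj : j ∈ r.leaves) : (node l r).lcaSize i j = r.lcaSize i j := by
  simp [lcaSize, hi, hj, Finset.disjoint_right.1 h hi]

lemma lcaSize_node_of_mem_left_right {l r : HTree n} (h : Disjoint l.leaves r.leaves)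
    {i j : Fin n} (hi : i ∈ l.leaves) (hj : j ∈ r.leaves) :
    (node l r).lcaSize i j = #(l.leaves ∪ r.leaves) := by
  simp [lcaSize, Finset.disjoint_left.1 h hi, Finset.disjoint_right.1 h hj]

lemma cut_linear (α β : ℝ) (u v : Fin n → Fin n → ℝ) (A B : Finset (Fin n)) :
    cut (fun i j => α * u i j + β * v i j) A B = α * cut u A B + β * cut v A B := by
  simp only [cut, sum_add_distrib, mul_sum]

lemma splitCost_linear (α β : ℝ) (u v : Fin n → Fin n → ℝ) (T : HTree n) :
    splitCost (fun i j => α * u i j + β * v i j) T = α * splitCost u T + β * splitCost v T := by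
  induction T with
  | leaf v => simp [splitCost]
  | node l r ihl ihr => simp only [splitCost, cut_linear, ihl, ihr]; ring

lemma sum_offDiag_lcaSize_eq_two_mul_splitCost {w : Fin n → Fin n → ℝ}
    (hw : ∀ i j, w i j = w j i) {T : HTree n} (hT : T.leafList.Nodup) :
    ∑ x ∈ T.leaves.offDiag, w x.1 x.2 * T.lcaSize x.1 x.2 = 2 * splitCost w T := by
  induction T with
  | leaf v => simp [splitCost]
  | node l r ihl ihr =>
    obtain ⟨hl, hr, hd⟩ := Nodup.of_node hT
    have h_ll : ∑ x ∈ l.leaves.offDiag, w x.1 x.2 * (node l r).lcaSize x.1 x.2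
        = ∑ x ∈ l.leaves.offDiag, w x.1 x.2 * l.lcaSize x.1 x.2 :=
      sum_congr rfl fun x hx => by
        rw [mem_offDiag] at hx; rw [lcaSize_node_of_mem_left hx.1 hx.2.1]
    have h_rr : ∑ x ∈ r.leaves.offDiag, w x.1 x.2 * (node l r).lcaSize x.1 x.2
        = ∑ x ∈ r.leaves.offDiag, w x.1 x.2 * r.lcaSize x.1 x.2 :=
      sum_congr rfl fun x hx => by
        rw [mem_offDiag] at hx; rw [lcaSize_node_of_mem_right hd hx.1 hx.2.1]
    have h_lr : ∑ x ∈ l.leaves ×ˢ r.leaves, w x.1 x.2 * (node l r).lcaSize x.1 x.2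
        = #(l.leaves ∪ r.leaves) * cut w l.leaves r.leaves := by
      rw [cut, mul_sum, sum_product]
      refine sum_congr rfl fun i hi => ?_
      rw [mul_sum]
      refine sum_congr rfl fun j hj => ?_
      rw [lcaSize_node_of_mem_left_right hd hi hj, mul_comm]
    have h_rl : ∑ x ∈ r.leaves ×ˢ l.leaves, w x.1 x.2 * (node l r).lcaSize x.1 x.2
        = #(l.leaves ∪ r.leaves) * cut w l.leaves r.leaves := by
      rw [cut, mul_sum, sum_product_right]
      refine sum_congr rfl fun i hi => ?_
      rw [mul_sum]
      refine sum_congr rfl fun j hj => ?_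
      rw [lcaSize_comm, lcaSize_node_of_mem_left_right hd hi hj, hw, mul_comm]
    rw [leaves_node, offDiag_union hd, sum_union, sum_union, sum_union, h_ll, h_rr, h_lr, h_rl,
      ihl hl, ihr hr, splitCost]
    · ring
    all_goals
      simp only [Finset.disjoint_left, mem_union, mem_offDiag, mem_product]
      have := Finset.disjoint_left.1 hd
      grind

lemma pairCost_eq_splitCost {w : Fin n → Fin n → ℝ} (hw : ∀ i j, w i j = w j i)
    {T : HTree n} (hT : T.IsFullTree) : T.pairCost w = splitCost w T := by
  have h := sum_offDiag_lcaSize_eq_two_mul_splitCost hw hT.1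
  rw [hT.2, sum_offDiag_eq_two_mul_sum_lt (fun i j => w i j * T.lcaSize i j)
    fun i j => by rw [hw, lcaSize_comm]] at h
  rw [pairCost]
  linarith

def sameSide (L : Finset (Fin n)) (i j : Fin n) : ℝ := if (i ∈ L ↔ j ∈ L) then 1 else 0

lemma cut_sameSide (L A B : Finset (Fin n)) :
    cut (sameSide L) A B = #(A ∩ L) * #(B ∩ L) + #(A ∩ Lᶜ) * #(B ∩ Lᶜ) := by
  have h : ∀ i j, sameSide L i j = (if i ∈ L then 1 else 0) * (if j ∈ L then 1 else 0)
      + (if i ∈ Lᶜ then 1 else 0) * (if j ∈ Lᶜ then 1 else 0) := by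
    intro i j; by_cases i ∈ L <;> by_cases j ∈ L <;> simp_all [sameSide]
  simp only [cut, h, sum_add_distrib, ← mul_sum, ← sum_mul, sum_boole, filter_mem_eq_inter]

noncomputable def surplus (L : Finset (Fin n)) : HTree n → ℝ
  | .leaf _ => 0
  | .node l r =>
      splitSurplus #(l.leaves ∩ L) #(r.leaves ∩ L) #(l.leaves ∩ Lᶜ) #(r.leaves ∩ Lᶜ)
        + surplus L l + surplus L r

lemma surplus_nonneg (L : Finset (Fin n)) (T : HTree n) : 0 ≤ surplus L T := by
  induction T with
  | leaf v => simp [surplus]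
  | node l r ihl ihr => simp only [surplus, splitSurplus]; positivity

lemma surplus_compl (L : Finset (Fin n)) (T : HTree n) : surplus Lᶜ T = surplus L T := by
  induction T with
  | leaf v => rfl
  | node l r ihl ihr => simp only [surplus, splitSurplus, compl_compl, ihl, ihr]; ring

lemma surplus_eq_zero_of_subset {L : Finset (Fin n)} {T : HTree n} (h : T.leaves ⊆ L) :
    surplus L T = 0 := by
  induction T with
  | leaf v => rfl
  | node l r ihl ihr =>
    rw [leaves_node, union_subset_iff] at h
    simp [surplus, splitSurplus, ihl h.1, ihr h.2,
      disjoint_iff_inter_eq_empty.1 (disjoint_compl_right.mono_left h.1),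
      disjoint_iff_inter_eq_empty.1 (disjoint_compl_right.mono_left h.2)]

lemma splitCost_sameSide (L : Finset (Fin n)) {T : HTree n} (hT : T.leafList.Nodup) :
    splitCost (sameSide L) T
      = cliqueCost #(T.leaves ∩ L) + cliqueCost #(T.leaves ∩ Lᶜ) + surplus L T := by
  induction T with
  | leaf v =>
    rw [cliqueCost_of_le_one, cliqueCost_of_le_one] <;> simp [splitCost, surplus, card_le_one]
  | node l r ihl ihr =>
    obtain ⟨hl, hr, hd⟩ := Nodup.of_node hT
    have h_card : #(l.leaves ∪ r.leaves) = #(l.leaves ∩ L) + #(r.leaves ∩ L)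
        + (#(l.leaves ∩ Lᶜ) + #(r.leaves ∩ Lᶜ)) := by
      rw [← leaves_node, ← card_leaves_node_inter hd, ← card_leaves_node_inter hd,
        card_inter_add_card_inter_compl]
    rw [splitCost, ihl hl, ihr hr, cut_sameSide, h_card, card_leaves_node_inter hd,
      card_leaves_node_inter hd, cliqueCost_add, cliqueCost_add, surplus, splitSurplus]
    push_cast
    ring

lemma pairCost_planted (p q : ℝ) (L : Finset (Fin n)) {T : HTree n} (hT : T.IsFullTree) :
    T.pairCost (fun i j => if (i ∈ L ↔ j ∈ L) then p else q)
      = q * cliqueCost n + (p - q) * (cliqueCost #L + cliqueCost #Lᶜ + surplus L T) := by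
  have hw : (fun i j => if (i ∈ L ↔ j ∈ L) then p else q)
      = fun i j => q * sameSide univ i j + (p - q) * sameSide L i j := by
    funext i j; by_cases i ∈ L <;> by_cases j ∈ L <;> simp_all [sameSide]
  rw [pairCost_eq_splitCost (fun i j => by by_cases i ∈ L <;> by_cases j ∈ L <;> simp_all) hT,
    hw, splitCost_linear, splitCost_sameSide univ hT.1, splitCost_sameSide L hT.1, hT.2,
    surplus_eq_zero_of_subset (subset_univ _)]
  simp [cliqueCost]

lemma surplus_node_eq_zero {L : Finset (Fin n)} {l r : HTree n} (hl : l.leaves ⊆ L)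
    (hr : r.leaves ⊆ Lᶜ) : surplus L (node l r) = 0 := by
  have hl' : l.leaves ∩ Lᶜ = ∅ :=
    disjoint_iff_inter_eq_empty.1 (disjoint_compl_right.mono_left hl)
  have hr' : r.leaves ∩ L = ∅ :=
    disjoint_iff_inter_eq_empty.1 (subset_compl_iff_disjoint_right.1 hr)
  have hsr : surplus L r = 0 := by rw [← surplus_compl]; exact surplus_eq_zero_of_subset hr
  simp [surplus, splitSurplus, hl', hr', hsr, surplus_eq_zero_of_subset hl]

lemma surplus_eq_zero_of_top_split {L : Finset (Fin n)} {l r : HTree n}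
    (h : (node l r).leafList.Nodup) (hlr : l.leaves = L ∨ r.leaves = L) :
    surplus L (node l r) = 0 := by
  obtain ⟨-, -, hd⟩ := Nodup.of_node h
  rcases hlr with rfl | rfl
  · exact surplus_node_eq_zero subset_rfl (subset_compl_iff_disjoint_left.2 hd)
  · rw [← surplus_compl]
    exact surplus_node_eq_zero (subset_compl_iff_disjoint_right.2 hd) (compl_compl _).ge

def IsGoodSplit (s t : ℝ) (L : Finset (Fin n)) (l r : HTree n) : Prop :=
  s ≤ (#((l.leaves ∪ r.leaves) ∩ L) : ℝ) ∧ s ≤ (#((l.leaves ∪ r.leaves) ∩ Lᶜ) : ℝ) ∧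
    (((#(l.leaves ∩ L) : ℝ) ≤ t ∧ (#(r.leaves ∩ Lᶜ) : ℝ) ≤ t) ∨
      ((#(l.leaves ∩ Lᶜ) : ℝ) ≤ t ∧ (#(r.leaves ∩ L) : ℝ) ≤ t))

/-- The deficit term pays for the leaves lost on the way down from the root: a leaf of `L` leaving
a split with `≥ s` leaves of each cluster is charged `≥ s²` there, by `sq_mul_le_splitSurplus`. -/
theorem mul_sq_lt_surplus_add {s t : ℝ} (hs : 1 < 2 * s) {L : Finset (Fin n)}
    (hL : (#L : ℝ) ≤ s + t) (hLc : (#Lᶜ : ℝ) ≤ s + t) {T : HTree n} (hT : T.leafList.Nodup)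
    (hbad : ∀ l r, Subtree (node l r) T → ¬ IsGoodSplit s t L l r)
    (hA : s ≤ #(T.leaves ∩ L)) (hC : s ≤ #(T.leaves ∩ Lᶜ)) :
    t * s ^ 2 < surplus L T + s ^ 2 * ((s + t - #(T.leaves ∩ L)) + (s + t - #(T.leaves ∩ Lᶜ))) := by
  induction T with
  | leaf v =>
    have h := card_inter_add_card_inter_compl (leaf v).leaves L
    rw [leaves_leaf, card_singleton] at h
    have h' : (#({v} ∩ L) : ℝ) + #({v} ∩ Lᶜ) = 1 := by exact_mod_cast h
    rw [leaves_leaf] at hA hC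
    linarith
  | node l r ihl ihr =>
    obtain ⟨hl, hr, hd⟩ := Nodup.of_node hT
    have hAle : (#((node l r).leaves ∩ L) : ℝ) ≤ s + t :=
      le_trans (by exact_mod_cast card_le_card inter_subset_right) hL
    have hCle : (#((node l r).leaves ∩ Lᶜ) : ℝ) ≤ s + t :=
      le_trans (by exact_mod_cast card_le_card inter_subset_right) hLc
    have hgood := hbad l r (Subtree.refl _)
    rw [IsGoodSplit, ← leaves_node] at hgood
    simp only [card_leaves_node_inter hd, Nat.cast_add] at hA hC hAle hCle hgood ⊢
    have hsl := surplus_nonneg L l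
    have hsr := surplus_nonneg L r
    rw [surplus]
    by_cases hbl : s ≤ #(l.leaves ∩ L) ∧ s ≤ #(l.leaves ∩ Lᶜ)
    · have ih := ihl hl (fun l' r' h => hbad l' r' h.left) hbl.1 hbl.2
      have := sq_mul_le_splitSurplus (by linarith) hbl.1 hbl.2 (Nat.cast_nonneg #(r.leaves ∩ L))
        (Nat.cast_nonneg #(r.leaves ∩ Lᶜ))
      linarith
    by_cases hbr : s ≤ #(r.leaves ∩ L) ∧ s ≤ #(r.leaves ∩ Lᶜ)
    · have ih := ihr hr (fun l' r' h => hbad l' r' h.right) hbr.1 hbr.2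
      have := sq_mul_le_splitSurplus (by linarith) hbr.1 hbr.2 (Nat.cast_nonneg #(l.leaves ∩ L))
        (Nat.cast_nonneg #(l.leaves ∩ Lᶜ))
      rw [splitSurplus_swap] at this
      linarith
    push Not at hbl hbr hgood
    obtain ⟨hg₁, hg₂⟩ := hgood hA hC
    have := mul_sq_lt_splitSurplus_add (by linarith) (Nat.cast_nonneg _) (Nat.cast_nonneg _)
      (Nat.cast_nonneg _) (Nat.cast_nonneg _) hA hC hAle hCle ((lt_or_ge _ s).imp_right hbl)
      ((lt_or_ge _ s).imp_right hbr) ((lt_or_ge t _).imp_right hg₁) ((lt_or_ge t _).imp_right hg₂)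
    linarith

end HTree

theorem not_eps_good_costly_general (n : ℕ) (hn : Even n) (p q ε : ℝ)
    (hqp : q < p) (hε0 : 0 < ε) (hε : ε < 1 / 6)
    (L : Finset (Fin n)) (hL : L = Finset.univ.filter (fun i : Fin n => i.val < n / 2))
    (Tstar : HTree n) (hTs : Tstar.IsFullTree)
    (htop : ∃ l r : HTree n, Tstar = .node l r ∧ (l.leaves = L ∨ r.leaves = L))
    (T : HTree n) (hT : T.IsFullTree) (hbad : ¬ T.EpsGood ε L) :
    Tstar.pairCost (fun i j => if (i ∈ L ↔ j ∈ L) then p else q)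
        + (1 / 16) * ε * (p - q) * (n : ℝ) ^ 3
      < T.pairCost (fun i j => if (i ∈ L ↔ j ∈ L) then p else q) := by
  obtain ⟨m, rfl⟩ := hn
  have hL_card : #L = m := by rw [hL, Fin.card_filter_val_lt]; omega
  have hLc_card : #Lᶜ = m := by rw [card_compl, hL_card, Fintype.card_fin]; omega
  have hm : (1 : ℝ) ≤ m := by have := T.pos_of_tree; norm_cast; omega
  have h_half (x : ℝ) : x * ((m + m : ℕ) : ℝ) / 2 = x * m := by push_cast; ring
  have h_surplus : ε * m * ((1 - ε) * m) ^ 2 < HTree.surplus L T := by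
    have h := HTree.mul_sq_lt_surplus_add (s := (1 - ε) * m) (t := ε * m) (by nlinarith)
      (by rw [hL_card]; linarith) (by rw [hLc_card]; linarith) hT.1
      (fun l r hlr hgood => hbad ⟨l, r, hlr, by rwa [h_half, h_half]⟩)
      (by rw [hT.2, univ_inter, hL_card]; nlinarith) (by rw [hT.2, univ_inter, hLc_card]; nlinarith)
    rw [hT.2, univ_inter, univ_inter, hL_card, hLc_card] at h
    linarith
  obtain ⟨l, r, rfl, hlr⟩ := htop
  rw [HTree.pairCost_planted p q L hTs, HTree.pairCost_planted p q L hT,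
    HTree.surplus_eq_zero_of_top_split hTs.1 hlr]
  have h_gap : ε * m ^ 3 / 2 < HTree.surplus L T := by
    have h_sq : (1 : ℝ) / 2 ≤ (1 - ε) ^ 2 := by nlinarith
    have h_cube : 0 < ε * (m : ℝ) ^ 3 := by positivity
    nlinarith [mul_le_mul_of_nonneg_left h_sq h_cube.le]
  push_cast
  nlinarith [mul_lt_mul_of_pos_left h_gap (sub_pos.2 hqp)]

/-- In the `(n,p,q)`-planted partition model (clusters `L = {i < n/2}` and `R = Lᶜ`),
if `T*` has top split `(L, R)` and `T` is not `ε`-good for some `0 < ε < 1/6`, then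
`E[cost(T)] > E[cost(T*)] + (1/16) ε (p-q) n³`.  Here `E[cost(T)]` is
`Σ_{{i,j}} Pr(edge ij) |leaves(T[i ∨ j])|`. -/
theorem not_eps_good_costly (n : ℕ) (hn : Even n) (p q ε : ℝ)
    (hq0 : 0 ≤ q) (hqp : q < p) (hp1 : p ≤ 1) (hε0 : 0 < ε) (hε : ε < 1 / 6)
    (L : Finset (Fin n)) (hL : L = Finset.univ.filter (fun i : Fin n => i.val < n / 2))
    (Tstar : HTree n) (hTs : Tstar.IsFullTree)
    (htop : ∃ l r : HTree n, Tstar = .node l r ∧ (l.leaves = L ∨ r.leaves = L))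
    (T : HTree n) (hT : T.IsFullTree) (hbad : ¬ T.EpsGood ε L) :
    Tstar.pairCost (fun i j => if (i ∈ L ↔ j ∈ L) then p else q)
        + (1 / 16) * ε * (p - q) * (n : ℝ) ^ 3
      < T.pairCost (fun i j => if (i ∈ L ↔ j ∈ L) then p else q) :=
  not_eps_good_costly_general n hn p q ε hqp hε0 hε L hL Tstar hTs htop T hT hbad
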